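/- arXiv:0909.4101 — 2 statements merged into one kernel-verified Lean document; each statement's English description precedes it below -/
import Mathlib

section
/- For every x ∈ S^n and every f ∈ H_d with ‖f‖_W = 1, there exists g ∈ Σ_ℝ(x) with ‖f − g‖_W = κ̃(f,x)^{-1}; in particular dist(f, Σ_ℝ(x)) ≤ κ̃(f,x)^{-1}. -/
open MvPolynomial Finset ENNReal

/-- Bombieri–Weyl inner product of two polynomials (intended for homogeneous
polynomials of the same degree `d`): `⟨Σ aⱼ xʲ, Σ bⱼ xʲ⟩_W = Σ aⱼ bⱼ / binom(d, j)`
where `binom(d, j) = d! / (j₀! ⋯ jₙ!)`. -/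
noncomputable def bwInner {m : ℕ} (p q : MvPolynomial (Fin m) ℝ) : ℝ :=
  ∑ j ∈ p.support ∪ q.support,
    (p.coeff j * q.coeff j) / (Nat.multinomial Finset.univ j : ℝ)

/-- Bombieri–Weyl norm of one polynomial. -/
noncomputable def bwNorm {m : ℕ} (p : MvPolynomial (Fin m) ℝ) : ℝ :=
  Real.sqrt (bwInner p p)

/-- Bombieri–Weyl norm `‖f‖_W` of a system `f = (f_1, …, f_n)`. -/
noncomputable def bwNormSys {n : ℕ} (f : Fin n → MvPolynomial (Fin (n + 1)) ℝ) : ℝ :=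
  Real.sqrt (∑ i, bwInner (f i) (f i))

/-- Distance (w.r.t. the Bombieri–Weyl norm) from a system `f` to a set `S` of systems. -/
noncomputable def bwDist {n : ℕ} (f : Fin n → MvPolynomial (Fin (n + 1)) ℝ)
    (S : Set (Fin n → MvPolynomial (Fin (n + 1)) ℝ)) : ℝ :=
  sInf ((fun g => bwNormSys (f - g)) '' S)

/-- The unit sphere `Sⁿ ⊆ ℝ^{n+1}`. -/
def unitSphere (n : ℕ) : Set (Fin (n + 1) → ℝ) := {x | ∑ k, x k ^ 2 = 1}

/-- `f` belongs to `H_d`: each component is homogeneous of degree `d i`. -/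
def IsSystem {n : ℕ} (d : Fin n → ℕ) (f : Fin n → MvPolynomial (Fin (n + 1)) ℝ) : Prop :=
  ∀ i, (f i).IsHomogeneous (d i)

/-- The derivative `Df(x)` restricted to the tangent space `T_x Sⁿ = x^⊥` is singular,
i.e. it kills some nonzero tangent vector `v`. -/
def SingularAt {n : ℕ} (f : Fin n → MvPolynomial (Fin (n + 1)) ℝ)
    (x : Fin (n + 1) → ℝ) : Prop :=
  ∃ v : Fin (n + 1) → ℝ, v ≠ 0 ∧ (∑ k, v k * x k = 0) ∧
    ∀ i, ∑ k, MvPolynomial.eval x (MvPolynomial.pderiv k (f i)) * v k = 0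

/-- `Σ_ℝ(x)`: the systems in `H_d` having `x` as a multiple zero. -/
def SigmaRx {n : ℕ} (d : Fin n → ℕ) (x : Fin (n + 1) → ℝ) :
    Set (Fin n → MvPolynomial (Fin (n + 1)) ℝ) :=
  {g | IsSystem d g ∧ (∀ i, MvPolynomial.eval x (g i) = 0) ∧ SingularAt g x}

/-- `Σ_ℝ = ⋃_{x ∈ Sⁿ} Σ_ℝ(x)`: the systems in `H_d` with a multiple zero on `Sⁿ`. -/
def SigmaR {n : ℕ} (d : Fin n → ℕ) : Set (Fin n → MvPolynomial (Fin (n + 1)) ℝ) :=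
  ⋃ x ∈ unitSphere n, SigmaRx d x

/-- The smallest singular value of `diag(1/√dᵢ) · Df(x)|_{T_x Sⁿ}`, i.e.
`inf {‖diag(1/√dᵢ)·Df(x) v‖₂ : v ⊥ x, ‖v‖₂ = 1}`.  This equals
`‖f‖_W · μ̃_norm(f,x)⁻¹`, where `μ̃_norm(f,x) = ‖f‖_W ‖(Df(x)|_{T_x Sⁿ})⁻¹ diag(√dᵢ)‖`
(spectral norm, `+∞` when `Df(x)|_{T_x Sⁿ}` is singular); it is `0` exactly
when `μ̃_norm(f,x) = +∞`. -/
noncomputable def sigmaMin {n : ℕ} (d : Fin n → ℕ)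
    (f : Fin n → MvPolynomial (Fin (n + 1)) ℝ) (x : Fin (n + 1) → ℝ) : ℝ :=
  sInf ((fun v => Real.sqrt (∑ i,
      ((∑ k, MvPolynomial.eval x (MvPolynomial.pderiv k (f i)) * v k) / Real.sqrt (d i)) ^ 2)) ''
    {v : Fin (n + 1) → ℝ | (∑ k, v k * x k = 0) ∧ ∑ k, v k ^ 2 = 1})

/-- `κ̃(f, x) = ‖f‖_W / (‖f‖_W² μ̃_norm(f,x)⁻² + ‖f(x)‖₂²)^{1/2}` as an extended
nonnegative real (value `+∞` when `f` has `x` as multiple zero), using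
`‖f‖_W² μ̃_norm(f,x)⁻² = (sigmaMin d f x)²`. -/
noncomputable def kappaAt {n : ℕ} (d : Fin n → ℕ)
    (f : Fin n → MvPolynomial (Fin (n + 1)) ℝ) (x : Fin (n + 1) → ℝ) : ℝ≥0∞ :=
  ENNReal.ofReal (bwNormSys f) /
    ENNReal.ofReal (Real.sqrt (sigmaMin d f x ^ 2 + ∑ i, (MvPolynomial.eval x (f i)) ^ 2))

/-- `κ̃(f) = max_{x ∈ Sⁿ} κ̃(f, x)`. -/
noncomputable def kappa {n : ℕ} (d : Fin n → ℕ)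
    (f : Fin n → MvPolynomial (Fin (n + 1)) ℝ) : ℝ≥0∞ :=
  ⨆ x ∈ unitSphere n, kappaAt d f x

/-!
The Bombieri–Weyl inner product has reproducing kernel `⟨x,·⟩ ^ d`: `⟨p, ⟨x,·⟩ ^ d⟩_W = p(x)`
for `p` homogeneous of degree `d`, and its derivative form reads
`d ⟨p, ⟨x,·⟩ ^ (d - 1) ⟨v,·⟩⟩_W = Dp(x) v`. For a unit vector `v ⊥ x` the two kernels are
orthogonal, of squared norms `1` and `1 / d`. Take `v` where the smallest singular value `σ` of
`diag(dᵢ^(-1/2)) Df(x)|_{T_x Sⁿ}` is attained and subtract from each `fᵢ` its projection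
`hᵢ = fᵢ(x) ⟨x,·⟩ ^ dᵢ + Dfᵢ(x) v ⟨x,·⟩ ^ (dᵢ - 1) ⟨v,·⟩`. Then `g = f - h` vanishes at `x` with
`Dg(x) v = 0`, and `‖h‖²_W = ‖f(x)‖² + Σ (Dfᵢ(x) v)² / dᵢ = ‖f(x)‖² + σ²`, which is
`κ̃(f,x)⁻²` when `‖f‖_W = 1`.
-/

section BombieriWeyl

variable {m : ℕ}

lemma bwInner_eq_sum_of_support_subset {p q : MvPolynomial (Fin m) ℝ} {s : Finset (Fin m →₀ ℕ)}
    (hs : p.support ⊆ s) :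
    bwInner p q = ∑ j ∈ s, p.coeff j * q.coeff j / (Nat.multinomial univ j : ℝ) := by
  have hzero : ∀ j ∉ p.support, p.coeff j * q.coeff j / (Nat.multinomial univ j : ℝ) = 0 :=
    fun j hj => by rw [notMem_support_iff.mp hj, zero_mul, zero_div]
  rw [bwInner, ← sum_subset subset_union_left fun j _ hj => hzero j hj,
    sum_subset hs fun j _ hj => hzero j hj]

lemma bwInner_comm (p q : MvPolynomial (Fin m) ℝ) : bwInner p q = bwInner q p := by
  simp only [bwInner, union_comm p.support, mul_comm (p.coeff _)]

lemma bwInner_add_left (p q r : MvPolynomial (Fin m) ℝ) :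
    bwInner (p + q) r = bwInner p r + bwInner q r := by
  classical
  rw [bwInner_eq_sum_of_support_subset (subset_union_left (s₂ := p.support ∪ q.support)),
    bwInner_eq_sum_of_support_subset (subset_union_left.trans subset_union_right),
    bwInner_eq_sum_of_support_subset (subset_union_right.trans subset_union_right),
    ← sum_add_distrib]
  exact sum_congr rfl fun j _ => by rw [coeff_add]; ring

lemma bwInner_C_mul_left (a : ℝ) (p q : MvPolynomial (Fin m) ℝ) :
    bwInner (C a * p) q = a * bwInner p q := by
  rw [bwInner_eq_sum_of_support_subset (C_mul' (a := a) (p := p) ▸ support_smul),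
    bwInner_eq_sum_of_support_subset subset_rfl, mul_sum]
  exact sum_congr rfl fun j _ => by rw [coeff_C_mul]; ring

lemma bwInner_C_mul_add_C_mul_self (a b : ℝ) (p q : MvPolynomial (Fin m) ℝ) :
    bwInner (C a * p + C b * q) (C a * p + C b * q) =
      a ^ 2 * bwInner p p + 2 * a * b * bwInner p q + b ^ 2 * bwInner q q := by
  have hright : ∀ r, bwInner r (C a * p + C b * q) = a * bwInner r p + b * bwInner r q :=
    fun r => by
      rw [bwInner_comm, bwInner_add_left, bwInner_C_mul_left, bwInner_C_mul_left,
        bwInner_comm p, bwInner_comm q]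
  rw [bwInner_add_left, bwInner_C_mul_left, bwInner_C_mul_left, hright, hright, bwInner_comm q]
  ring

end BombieriWeyl

namespace Nat

lemma succ_sum_mul_multinomial {ι : Type*} [Fintype ι] [DecidableEq ι] (j : ι → ℕ) (k : ι) :
    (∑ l, j l + 1) * multinomial univ j = (j k + 1) * multinomial univ (j + Pi.single k 1) := by
  have hsum : ∑ l, (j + Pi.single k 1 : ι → ℕ) l = ∑ l, j l + 1 := by
    simp [sum_add_distrib]
  have hprod : ∏ l, ((j + Pi.single k 1 : ι → ℕ) l)! = (j k + 1) * ∏ l, (j l)! := by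
    rw [← mul_prod_erase univ _ (mem_univ k), ← mul_prod_erase univ (fun l => (j l)!) (mem_univ k),
      prod_congr rfl fun l hl => by rw [Pi.add_apply, Pi.single_eq_of_ne (ne_of_mem_erase hl),
        add_zero]]
    simp [Nat.factorial_succ, mul_assoc]
  refine Nat.eq_of_mul_eq_mul_left (prod_factorial_pos univ j) ?_
  rw [mul_left_comm, multinomial_spec, ← mul_assoc, mul_comm _ (j k + 1), ← hprod,
    multinomial_spec, hsum, Nat.factorial_succ]

end Nat

lemma MvPolynomial.IsHomogeneous.sum_eq_of_mem_support {σ R : Type*} [Fintype σ]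
    [CommSemiring R] {p : MvPolynomial σ R} {e : ℕ} (hp : p.IsHomogeneous e) {j : σ →₀ ℕ}
    (hj : j ∈ p.support) : ∑ k, j k = e := by
  rw [← Finsupp.degree_eq_sum, Finsupp.degree_eq_weight_one]
  exact hp (mem_support_iff.mp hj)

section LinearForm

variable {m : ℕ}

noncomputable def linForm (y : Fin m → ℝ) : MvPolynomial (Fin m) ℝ := ∑ k, C (y k) * X k

lemma isHomogeneous_linForm (y : Fin m → ℝ) : (linForm y).IsHomogeneous 1 :=
  IsHomogeneous.sum _ _ _ fun k _ => isHomogeneous_C_mul_X (y k) k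

lemma isHomogeneous_linForm_pow (y : Fin m → ℝ) (e : ℕ) : (linForm y ^ e).IsHomogeneous e := by
  simpa using (isHomogeneous_linForm y).pow e

lemma eval_linForm (y z : Fin m → ℝ) : eval y (linForm z) = ∑ k, z k * y k := by
  simp [linForm]

lemma pderiv_linForm (z : Fin m → ℝ) (k : Fin m) : pderiv k (linForm z) = C (z k) := by
  simp [linForm, pderiv_X, Pi.single_apply]

lemma coeff_linForm_pow (y : Fin m → ℝ) (e : ℕ) (j : Fin m →₀ ℕ) :
    coeff j (linForm y ^ e) =
      if ∑ k, j k = e then (Nat.multinomial univ j : ℝ) * ∏ k, y k ^ j k else 0 := by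
  classical
  have hmonomial : ∀ k : Fin m → ℕ, ∏ i, (C (y i) * X i : MvPolynomial (Fin m) ℝ) ^ k i =
      monomial (Finsupp.equivFunOnFinite.symm k) (∏ i, y i ^ k i) := fun k => by
    simp_rw [mul_pow, prod_mul_distrib, ← map_pow, ← map_prod, monomial_eq, Finsupp.prod_pow]
    rfl
  rw [linForm, sum_pow_eq_sum_piAntidiag, coeff_sum]
  simp_rw [hmonomial, ← C_eq_coe_nat, coeff_C_mul, coeff_monomial, Equiv.symm_apply_eq, mul_ite,
    mul_zero, sum_ite_eq', mem_piAntidiag]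
  simp only [mem_univ, implies_true, and_true]
  rfl

end LinearForm

section Reproducing

variable {m : ℕ}

lemma bwInner_linForm_pow {p : MvPolynomial (Fin m) ℝ} {e : ℕ} (hp : p.IsHomogeneous e)
    (y : Fin m → ℝ) : bwInner p (linForm y ^ e) = eval y p := by
  rw [bwInner_eq_sum_of_support_subset subset_rfl, eval_eq']
  refine sum_congr rfl fun j hj => ?_
  rw [coeff_linForm_pow, if_pos (hp.sum_eq_of_mem_support hj)]
  field_simp [(Nat.multinomial_pos univ j).ne']

lemma coeff_linForm_pow_mul_linForm (x v : Fin m → ℝ) {e : ℕ} {j : Fin m →₀ ℕ}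
    (hj : ∑ l, j l = e + 1) :
    (e + 1 : ℝ) * coeff j (linForm x ^ e * linForm v) =
      Nat.multinomial univ j *
        ∑ k, v k * j k * ∏ l, x l ^ (j - Finsupp.single k 1 : Fin m →₀ ℕ) l := by
  classical
  have hsplit : linForm x ^ e * linForm v = ∑ k, C (v k) * (linForm x ^ e * X k) := by
    rw [show linForm v = ∑ k, C (v k) * X k from rfl, mul_sum]
    exact sum_congr rfl fun k _ => by ring
  rw [hsplit, coeff_sum, mul_sum, mul_sum]
  refine sum_congr rfl fun k _ => ?_
  rw [coeff_C_mul, coeff_mul_X']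
  split_ifs with hk
  · obtain ⟨j', rfl⟩ : ∃ j', j = j' + Finsupp.single k 1 :=
      ⟨j - Finsupp.single k 1, (tsub_add_cancel_of_le (Finsupp.single_le_iff.mpr
        (Nat.one_le_iff_ne_zero.mpr (Finsupp.mem_support_iff.mp hk)))).symm⟩
    have hcoe : ⇑(j' + Finsupp.single k 1 : Fin m →₀ ℕ) = ⇑j' + Pi.single k 1 := by
      rw [Finsupp.coe_add, Finsupp.single_eq_pi_single]
    have hsum : ∑ l, j' l = e := by simpa [hcoe, sum_add_distrib] using hj
    have hmult : (e + 1) * Nat.multinomial univ j' =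
        (j' k + 1) * Nat.multinomial univ ⇑(j' + Finsupp.single k 1 : Fin m →₀ ℕ) := by
      rw [hcoe, ← hsum]
      exact Nat.succ_sum_mul_multinomial j' k
    rw [add_tsub_cancel_right, coeff_linForm_pow, if_pos hsum, Finsupp.add_apply,
      Finsupp.single_eq_same]
    have hmultR := congrArg (Nat.cast (R := ℝ)) hmult
    push_cast at hmultR ⊢
    linear_combination (v k * ∏ l, x l ^ j' l) * hmultR
  · simp [Finsupp.notMem_support_iff.mp hk]

lemma eval_pderiv_eq_sum (x : Fin m → ℝ) (p : MvPolynomial (Fin m) ℝ) (k : Fin m) :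
    eval x (pderiv k p) =
      ∑ j ∈ p.support, coeff j p * j k * ∏ l, x l ^ (j - Finsupp.single k 1 : Fin m →₀ ℕ) l := by
  conv_lhs => rw [p.as_sum]
  rw [map_sum, map_sum]
  refine sum_congr rfl fun j _ => ?_
  rw [pderiv_monomial, eval_monomial, Finsupp.prod_pow]

lemma bwInner_linForm_pow_mul_linForm {p : MvPolynomial (Fin m) ℝ} {e : ℕ}
    (hp : p.IsHomogeneous (e + 1)) (x v : Fin m → ℝ) :
    (e + 1 : ℝ) * bwInner p (linForm x ^ e * linForm v) = ∑ k, eval x (pderiv k p) * v k := by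
  have hterm : ∀ j ∈ p.support,
      (e + 1 : ℝ) * (coeff j p * coeff j (linForm x ^ e * linForm v) / Nat.multinomial univ j) =
        ∑ k, coeff j p * j k * (∏ l, x l ^ (j - Finsupp.single k 1 : Fin m →₀ ℕ) l) * v k := by
    intro j hj
    rw [mul_div_assoc', mul_left_comm,
      coeff_linForm_pow_mul_linForm x v (hp.sum_eq_of_mem_support hj), mul_sum, mul_sum,
      sum_div]
    refine sum_congr rfl fun k _ => ?_
    field_simp [(Nat.multinomial_pos univ j).ne']
  simp_rw [bwInner_eq_sum_of_support_subset subset_rfl, mul_sum, sum_congr rfl hterm,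
    eval_pderiv_eq_sum, sum_mul]
  exact sum_comm

end Reproducing

section Jet

variable {m : ℕ}

noncomputable def dirDeriv (x v : Fin m → ℝ) : MvPolynomial (Fin m) ℝ →ₗ[ℝ] ℝ where
  toFun p := ∑ k, eval x (pderiv k p) * v k
  map_add' p q := by simp only [map_add, add_mul, sum_add_distrib]
  map_smul' a p := by
    simp only [(pderiv _).map_smul, smul_eval, smul_eq_mul, RingHom.id_apply, mul_sum, mul_assoc]

lemma dirDeriv_apply (x v : Fin m → ℝ) (p : MvPolynomial (Fin m) ℝ) :
    dirDeriv x v p = ∑ k, eval x (pderiv k p) * v k := rfl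

lemma dirDeriv_C_mul (x v : Fin m → ℝ) (a : ℝ) (p : MvPolynomial (Fin m) ℝ) :
    dirDeriv x v (C a * p) = a * dirDeriv x v p := by
  rw [C_mul', map_smul, smul_eq_mul]

lemma dirDeriv_mul (x v : Fin m → ℝ) (p q : MvPolynomial (Fin m) ℝ) :
    dirDeriv x v (p * q) = dirDeriv x v p * eval x q + eval x p * dirDeriv x v q := by
  simp only [dirDeriv_apply, mul_sum, sum_mul, ← sum_add_distrib]
  refine sum_congr rfl fun k _ => ?_
  rw [Derivation.leibniz, map_add, smul_eq_mul, smul_eq_mul, map_mul, map_mul]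
  ring

lemma dirDeriv_pow (x v : Fin m → ℝ) (p : MvPolynomial (Fin m) ℝ) (e : ℕ) :
    dirDeriv x v (p ^ e) = e * eval x p ^ (e - 1) * dirDeriv x v p := by
  simp only [dirDeriv_apply, pderiv_pow, map_mul, map_pow, map_natCast, mul_sum, mul_assoc]

lemma dirDeriv_linForm (x v z : Fin m → ℝ) : dirDeriv x v (linForm z) = ∑ k, z k * v k := by
  simp only [dirDeriv_apply, pderiv_linForm, eval_C]

def tangentUnitSphere (x : Fin m → ℝ) : Set (Fin m → ℝ) :=
  {v | (∑ k, v k * x k = 0) ∧ ∑ k, v k ^ 2 = 1}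

end Jet

section JetCorrection

variable {m : ℕ} {x v : Fin m → ℝ}

lemma eval_linForm_self (hx : ∑ k, x k ^ 2 = 1) : eval x (linForm x) = 1 := by
  simpa only [eval_linForm, sq] using hx

lemma eval_linForm_of_mem_tangentUnitSphere (hv : v ∈ tangentUnitSphere x) :
    eval x (linForm v) = 0 := by
  rw [eval_linForm, hv.1]

lemma dirDeriv_linForm_pow_self (hv : v ∈ tangentUnitSphere x) (e : ℕ) :
    dirDeriv x v (linForm x ^ e) = 0 := by
  rw [dirDeriv_pow, dirDeriv_linForm, sum_congr rfl fun k _ => mul_comm (x k) (v k), hv.1,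
    mul_zero]

lemma dirDeriv_linForm_pow_mul_linForm (hx : ∑ k, x k ^ 2 = 1) (hv : v ∈ tangentUnitSphere x)
    (e : ℕ) : dirDeriv x v (linForm x ^ e * linForm v) = 1 := by
  rw [dirDeriv_mul, dirDeriv_linForm_pow_self hv, dirDeriv_linForm, map_pow,
    eval_linForm_self hx, one_pow, zero_mul, zero_add, one_mul]
  simpa only [sq] using hv.2

lemma bwInner_linForm_pow_mul_linForm_self (hx : ∑ k, x k ^ 2 = 1)
    (hv : v ∈ tangentUnitSphere x) (e : ℕ) :
    bwInner (linForm x ^ e * linForm v) (linForm x ^ e * linForm v) = 1 / (e + 1 : ℝ) := by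
  have h := bwInner_linForm_pow_mul_linForm
    ((isHomogeneous_linForm_pow x e).mul (isHomogeneous_linForm v)) x v
  rw [← dirDeriv_apply, dirDeriv_linForm_pow_mul_linForm hx hv] at h
  rw [_root_.eq_div_iff (by positivity), mul_comm, h]

noncomputable def jetCorrection (d : ℕ) (p : MvPolynomial (Fin m) ℝ) (x v : Fin m → ℝ) :
    MvPolynomial (Fin m) ℝ :=
  C (eval x p) * linForm x ^ d + C (dirDeriv x v p) * (linForm x ^ (d - 1) * linForm v)

lemma isHomogeneous_jetCorrection {d : ℕ} (hd : 1 ≤ d) (p : MvPolynomial (Fin m) ℝ)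
    (x v : Fin m → ℝ) : (jetCorrection d p x v).IsHomogeneous d := by
  obtain ⟨e, rfl⟩ := Nat.exists_eq_add_of_le' hd
  rw [jetCorrection, Nat.add_sub_cancel]
  exact ((isHomogeneous_linForm_pow x _).C_mul _).add
    (((isHomogeneous_linForm_pow x e).mul (isHomogeneous_linForm v)).C_mul _)

lemma eval_jetCorrection (hx : ∑ k, x k ^ 2 = 1) (hv : v ∈ tangentUnitSphere x) (d : ℕ)
    (p : MvPolynomial (Fin m) ℝ) : eval x (jetCorrection d p x v) = eval x p := by
  rw [jetCorrection, map_add, map_mul, map_mul, map_mul, map_pow, map_pow, eval_C, eval_C,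
    eval_linForm_self hx, eval_linForm_of_mem_tangentUnitSphere hv]
  ring

lemma dirDeriv_jetCorrection (hx : ∑ k, x k ^ 2 = 1) (hv : v ∈ tangentUnitSphere x) (d : ℕ)
    (p : MvPolynomial (Fin m) ℝ) : dirDeriv x v (jetCorrection d p x v) = dirDeriv x v p := by
  rw [jetCorrection, map_add, dirDeriv_C_mul, dirDeriv_C_mul, dirDeriv_linForm_pow_self hv,
    dirDeriv_linForm_pow_mul_linForm hx hv]
  ring

lemma bwInner_jetCorrection_self {d : ℕ} (hd : 1 ≤ d) (hx : ∑ k, x k ^ 2 = 1)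
    (hv : v ∈ tangentUnitSphere x) (p : MvPolynomial (Fin m) ℝ) :
    bwInner (jetCorrection d p x v) (jetCorrection d p x v) =
      eval x p ^ 2 + dirDeriv x v p ^ 2 / d := by
  obtain ⟨e, rfl⟩ := Nat.exists_eq_add_of_le' hd
  have hxx : bwInner (linForm x ^ (e + 1)) (linForm x ^ (e + 1)) = 1 := by
    rw [bwInner_linForm_pow (isHomogeneous_linForm_pow x _), map_pow, eval_linForm_self hx,
      one_pow]
  have hxv : bwInner (linForm x ^ (e + 1)) (linForm x ^ e * linForm v) = 0 := by
    rw [bwInner_comm, bwInner_linForm_pow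
      ((isHomogeneous_linForm_pow x e).mul (isHomogeneous_linForm v)), map_mul,
      eval_linForm_of_mem_tangentUnitSphere hv, mul_zero]
  rw [jetCorrection, Nat.add_sub_cancel, bwInner_C_mul_add_C_mul_self, hxx, hxv,
    bwInner_linForm_pow_mul_linForm_self hx hv]
  push_cast
  ring

end JetCorrection

section TangentUnitSphere

variable {m : ℕ}

lemma isCompact_tangentUnitSphere (x : Fin m → ℝ) : IsCompact (tangentUnitSphere x) := by
  have hclosed : IsClosed (tangentUnitSphere x) :=
    (isClosed_eq (by fun_prop) continuous_const).inter (isClosed_eq (by fun_prop) continuous_const)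
  refine isCompact_Icc.of_isClosed_subset hclosed
    (fun v hv => show v ∈ Set.Icc (-1) 1 from ?_)
  have hsq : ∀ k, |v k| ≤ 1 := fun k => (sq_le_one_iff_abs_le_one _).mp <|
    hv.2 ▸ single_le_sum (fun l _ => sq_nonneg (v l)) (mem_univ k)
  exact ⟨fun k => (abs_le.mp (hsq k)).1, fun k => (abs_le.mp (hsq k)).2⟩

lemma tangentUnitSphere_nonempty (hm : 1 < m) (x : Fin m → ℝ) :
    (tangentUnitSphere x).Nonempty := by
  obtain ⟨u, hu, hu0⟩ := (Submodule.ne_bot_iff _).mp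
    ((Fintype.linearCombination ℝ x).ker_ne_bot_of_finrank_lt (by simpa using hm))
  obtain ⟨k₀, hk₀⟩ := Function.ne_iff.mp hu0
  have hpos : 0 < ∑ k, u k ^ 2 :=
    sum_pos' (fun k _ => sq_nonneg _) ⟨k₀, mem_univ _, sq_pos_iff.mpr hk₀⟩
  refine ⟨(√(∑ k, u k ^ 2))⁻¹ • u, ?_, ?_⟩
  · rw [LinearMap.mem_ker, Fintype.linearCombination_apply] at hu
    simp only [Pi.smul_apply, smul_eq_mul, mul_assoc, ← mul_sum] at hu ⊢
    rw [hu, mul_zero]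
  · simp_rw [Pi.smul_apply, smul_eq_mul, mul_pow, ← mul_sum, inv_pow, Real.sq_sqrt hpos.le]
    exact inv_mul_cancel₀ hpos.ne'

end TangentUnitSphere

lemma exists_sq_sigmaMin_eq {n : ℕ} (hn : 1 ≤ n) (d : Fin n → ℕ)
    (f : Fin n → MvPolynomial (Fin (n + 1)) ℝ) (x : Fin (n + 1) → ℝ) :
    ∃ v ∈ tangentUnitSphere x, sigmaMin d f x ^ 2 = ∑ i, dirDeriv x v (f i) ^ 2 / d i := by
  set F : (Fin (n + 1) → ℝ) → ℝ := fun v => √(∑ i, (dirDeriv x v (f i) / √(d i)) ^ 2)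
  have hF : Continuous F := by simp only [F, dirDeriv_apply]; fun_prop
  obtain ⟨v, hv, hmin⟩ := ((isCompact_tangentUnitSphere x).image hF).sInf_mem
    ((tangentUnitSphere_nonempty (by omega) x).image F)
  refine ⟨v, hv, ?_⟩
  change sInf (F '' tangentUnitSphere x) ^ 2 = _
  rw [← hmin, Real.sq_sqrt (sum_nonneg fun i _ => sq_nonneg _)]
  simp_rw [div_pow, Real.sq_sqrt (Nat.cast_nonneg _)]

section Systems

variable {n : ℕ} {d : Fin n → ℕ} {x v : Fin (n + 1) → ℝ}

lemma sub_jetCorrection_mem_sigmaRx (hd : ∀ i, 1 ≤ d i)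
    {f : Fin n → MvPolynomial (Fin (n + 1)) ℝ} (hf : IsSystem d f) (hx : ∑ k, x k ^ 2 = 1)
    (hv : v ∈ tangentUnitSphere x) :
    (fun i => f i - jetCorrection (d i) (f i) x v) ∈ SigmaRx d x := by
  refine ⟨fun i => (hf i).sub (isHomogeneous_jetCorrection (hd i) _ _ _), fun i => ?_,
    v, ?_, hv.1, fun i => ?_⟩
  · rw [map_sub, eval_jetCorrection hx hv, sub_self]
  · rintro rfl
    simpa using hv.2
  · rw [← dirDeriv_apply, map_sub, dirDeriv_jetCorrection hx hv, sub_self]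

lemma bwNormSys_jetCorrection (hd : ∀ i, 1 ≤ d i) (hx : ∑ k, x k ^ 2 = 1)
    (hv : v ∈ tangentUnitSphere x) (f : Fin n → MvPolynomial (Fin (n + 1)) ℝ) :
    bwNormSys (fun i => jetCorrection (d i) (f i) x v) =
      √(∑ i, eval x (f i) ^ 2 + ∑ i, dirDeriv x v (f i) ^ 2 / d i) := by
  simp_rw [bwNormSys, bwInner_jetCorrection_self (hd _) hx hv, sum_add_distrib]

end Systems

lemma bwDist_le_bwNormSys_sub {n : ℕ} {f g : Fin n → MvPolynomial (Fin (n + 1)) ℝ}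
    {S : Set (Fin n → MvPolynomial (Fin (n + 1)) ℝ)} (hg : g ∈ S) :
    bwDist f S ≤ bwNormSys (f - g) :=
  csInf_le ⟨0, by rintro _ ⟨h, _, rfl⟩; exact Real.sqrt_nonneg _⟩ ⟨g, hg, rfl⟩

lemma inv_kappaAt_of_bwNormSys_eq_one {n : ℕ} {d : Fin n → ℕ}
    {f : Fin n → MvPolynomial (Fin (n + 1)) ℝ} (hf1 : bwNormSys f = 1) (x : Fin (n + 1) → ℝ) :
    (kappaAt d f x)⁻¹ = ENNReal.ofReal √(sigmaMin d f x ^ 2 + ∑ i, eval x (f i) ^ 2) := by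
  rw [kappaAt, hf1, ENNReal.ofReal_one, one_div, inv_inv]

/-- For every `x ∈ Sⁿ` and every `f ∈ H_d` with `‖f‖_W = 1`, there exists
`g ∈ Σ_ℝ(x)` with `‖f - g‖_W = κ̃(f,x)⁻¹`; in particular
`dist(f, Σ_ℝ(x)) ≤ κ̃(f,x)⁻¹`. -/
theorem exists_sigmaRx_dist_eq_inv_kappaAt {n : ℕ} (hn : 1 ≤ n) (d : Fin n → ℕ)
    (hd : ∀ i, 1 ≤ d i) (x : Fin (n + 1) → ℝ) (hx : x ∈ unitSphere n)
    (f : Fin n → MvPolynomial (Fin (n + 1)) ℝ) (hf : IsSystem d f)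
    (hf1 : bwNormSys f = 1) :
    (∃ g ∈ SigmaRx d x, ENNReal.ofReal (bwNormSys (f - g)) = (kappaAt d f x)⁻¹) ∧
      ENNReal.ofReal (bwDist f (SigmaRx d x)) ≤ (kappaAt d f x)⁻¹ := by
  obtain ⟨v, hv, hσ⟩ := exists_sq_sigmaMin_eq hn d f x
  set g := fun i => f i - jetCorrection (d i) (f i) x v
  have hg : g ∈ SigmaRx d x := sub_jetCorrection_mem_sigmaRx hd hf hx hv
  have hfg : f - g = fun i => jetCorrection (d i) (f i) x v := by
    funext i
    simp [g]
  have hnorm : ENNReal.ofReal (bwNormSys (f - g)) = (kappaAt d f x)⁻¹ := by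
    rw [hfg, bwNormSys_jetCorrection hd hx hv, inv_kappaAt_of_bwNormSys_eq_one hf1, hσ,
      add_comm]
  exact ⟨⟨g, hg, hnorm⟩, hnorm ▸ ENNReal.ofReal_le_ofReal (bwDist_le_bwNormSys_sub hg)⟩
end

section
/- Let e_0 = (1,0,…,0) ∈ S^n. For every f ∈ H_d and every g ∈ H_d with g(e_0) = 0, writing Df(e_0) and Dg(e_0) for the restrictions of the derivatives at e_0 to the tangent space T_{e_0}S^n ≅ span(e_1,…,e_n), one has ‖f − g‖_W² ≥ ‖f(e_0)‖_2² + ‖diag(1/√d_1,…,1/√d_n)·Df(e_0) − diag(1/√d_1,…,1/√d_n)·Dg(e_0)‖_F², where ‖·‖_F is the Frobenius norm of n×n matrices. -/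
open MvPolynomial Finset ENNReal

/-! At `e₀ = (1, 0, …, 0)` a homogeneous polynomial `p` of degree `d` takes the value of its
coefficient of `x₀ ^ d`, and `∂p/∂xₖ (e₀)` (`k ≠ 0`) is its coefficient of `x₀ ^ (d - 1) * xₖ`.
These monomials have multinomial weights `1` and `d`, so the left-hand side, applied
componentwise to `p = fᵢ - gᵢ` (for which `p(e₀) = fᵢ(e₀)`), is a partial sum of the
Bombieri–Weyl sum of squares defining `‖f - g‖_W²`. -/

namespace MvPolynomial

variable {R σ : Type*} [CommSemiring R] [DecidableEq σ]

theorem prod_pow_piSingle_one_eq_zero {i k : σ} (hk : k ≠ i) {j : σ →₀ ℕ} (hj : j k ≠ 0) :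
    (j.prod fun l e => (Pi.single i 1 : σ → R) l ^ e) = 0 :=
  Finset.prod_eq_zero (Finsupp.mem_support_iff.mpr hj) (by simp [hk, zero_pow hj])

theorem IsHomogeneous.eval_piSingle_one {p : MvPolynomial σ R} {d : ℕ} (hp : p.IsHomogeneous d)
    (i : σ) : eval (Pi.single i 1) p = coeff (Finsupp.single i d) p := by
  conv_lhs => rw [p.as_sum, map_sum]
  rw [Finset.sum_eq_single (Finsupp.single i d)]
  · simp [eval_monomial]
  · intro j hj hji
    obtain ⟨k, hki, hjk⟩ : ∃ k ≠ i, j k ≠ 0 := by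
      by_contra! h
      have hj_single : j = Finsupp.single i (j i) := by
        ext k
        by_cases hki : k = i
        · simp [hki]
        · simp [Ne.symm hki, h k hki]
      have hdeg : j.degree = d := by
        by_contra hne
        exact Finsupp.mem_support_iff.mp hj (hp.coeff_eq_zero hne)
      rw [hj_single, Finsupp.degree_single] at hdeg
      exact hji (hdeg ▸ hj_single)
    rw [eval_monomial, prod_pow_piSingle_one_eq_zero hki hjk, mul_zero]
  · intro h
    rw [notMem_support_iff.mp h, monomial_zero, map_zero]

theorem IsHomogeneous.eval_piSingle_one_pderiv {p : MvPolynomial σ R} {d : ℕ}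
    (hp : p.IsHomogeneous d) {i m : σ} (hm : m ≠ i) :
    eval (Pi.single i 1) (pderiv m p) =
      coeff (Finsupp.single i (d - 1) + Finsupp.single m 1) p := by
  rw [hp.pderiv.eval_piSingle_one, coeff_pderiv]
  simp [hm.symm]

end MvPolynomial

open Nat in
theorem Nat.multinomial_univ_single_add_single {σ : Type*} [Fintype σ] [DecidableEq σ]
    {i m : σ} (h : i ≠ m) (a : ℕ) :
    Nat.multinomial Finset.univ ⇑(Finsupp.single i a + Finsupp.single m 1 : σ →₀ ℕ) = a + 1 := by
  have hsum : ∑ k, (Finsupp.single i a + Finsupp.single m 1 : σ →₀ ℕ) k = a + 1 := by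
    rw [← Finsupp.degree_eq_sum, map_add, Finsupp.degree_single, Finsupp.degree_single]
  have hprod : ∏ k, ((Finsupp.single i a + Finsupp.single m 1 : σ →₀ ℕ) k)! = a ! := by
    rw [Finset.prod_eq_single i (fun k _ hki => ?_) (by simp)]
    · simp [h.symm]
    · by_cases hkm : k = m
      · simp [hkm, h]
      · simp [Ne.symm hki, Ne.symm hkm]
  have := Nat.multinomial_spec Finset.univ ⇑(Finsupp.single i a + Finsupp.single m 1 : σ →₀ ℕ)
  rw [hsum, hprod, Nat.factorial_succ] at this
  exact Nat.eq_of_mul_eq_mul_left a.factorial_pos (by rw [this]; ring)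

theorem bwInner_self_nonneg {m : ℕ} (p : MvPolynomial (Fin m) ℝ) : 0 ≤ bwInner p p :=
  Finset.sum_nonneg fun _ _ => div_nonneg (mul_self_nonneg _) (Nat.cast_nonneg _)

theorem sum_sq_coeff_div_multinomial_le_bwInner {m : ℕ} {ι : Type*} [Fintype ι]
    {e : ι → (Fin m →₀ ℕ)} (he : Function.Injective e) (p : MvPolynomial (Fin m) ℝ) :
    ∑ k, coeff (e k) p ^ 2 / (Nat.multinomial Finset.univ (e k) : ℝ) ≤ bwInner p p := by
  classical
  set t : (Fin m →₀ ℕ) → ℝ := fun j => coeff j p ^ 2 / (Nat.multinomial Finset.univ j : ℝ)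
  have hbw : ∑ j ∈ Finset.univ.image e ∪ p.support, t j = bwInner p p := by
    rw [bwInner, Finset.union_self]
    refine (Finset.sum_subset Finset.subset_union_right fun j _ hj => ?_).symm.trans ?_
    · simp [t, notMem_support_iff.mp hj]
    · simp only [t, sq]
  calc ∑ k, t (e k) = ∑ j ∈ Finset.univ.image e, t j :=
        (Finset.sum_image fun _ _ _ _ h => he h).symm
    _ ≤ _ := hbw ▸ Finset.sum_le_sum_of_subset_of_nonneg Finset.subset_union_left
      fun j _ _ => div_nonneg (sq_nonneg _) (Nat.cast_nonneg _)

theorem MvPolynomial.IsHomogeneous.sq_eval_add_sum_sq_pderiv_div_le_bwInner {n d : ℕ}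
    {p : MvPolynomial (Fin (n + 1)) ℝ} (hp : p.IsHomogeneous d) :
    eval (Pi.single 0 1) p ^ 2 +
        ∑ k : Fin n, (eval (Pi.single 0 1) (pderiv k.succ p) / √d) ^ 2 ≤ bwInner p p := by
  set mono : Fin (n + 1) → (Fin (n + 1) →₀ ℕ) :=
    Fin.cons (Finsupp.single 0 d) fun k => Finsupp.single 0 (d - 1) + Finsupp.single k.succ 1
  have hinj : Function.Injective mono := by
    refine Fin.cons_injective_iff.mpr ⟨?_, fun a b hab => ?_⟩
    · rintro ⟨k, hk⟩
      simpa [(Fin.succ_ne_zero k).symm] using DFunLike.congr_fun hk k.succ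
    · by_contra hne
      simpa [(Fin.succ_ne_zero a).symm, Fin.succ_inj, hne] using DFunLike.congr_fun hab a.succ
  have hterm_zero : eval (Pi.single 0 1) p ^ 2 =
      coeff (mono 0) p ^ 2 / (Nat.multinomial Finset.univ (mono 0) : ℝ) := by
    simp [mono, hp.eval_piSingle_one, Finsupp.single_eq_pi_single, Nat.multinomial_single]
  have hterm_succ (k : Fin n) : (eval (Pi.single 0 1) (pderiv k.succ p) / √d) ^ 2 =
      coeff (mono k.succ) p ^ 2 / (Nat.multinomial Finset.univ (mono k.succ) : ℝ) := by
    rw [hp.eval_piSingle_one_pderiv (Fin.succ_ne_zero k)]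
    obtain _ | e := d
    -- both sides vanish: `x / √0 = 0`, and `p` has no monomial of degree `1`
    · simp [mono, hp.coeff_eq_zero]
    · rw [div_pow, Real.sq_sqrt (Nat.cast_nonneg _)]
      simp only [mono, Fin.cons_succ, Nat.add_sub_cancel,
        Nat.multinomial_univ_single_add_single (Fin.succ_ne_zero k).symm]
  calc _ = ∑ k, coeff (mono k) p ^ 2 / (Nat.multinomial Finset.univ (mono k) : ℝ) := by
        simp only [Fin.sum_univ_succ, hterm_zero, hterm_succ]
    _ ≤ bwInner p p := sum_sq_coeff_div_multinomial_le_bwInner hinj p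

theorem sq_dist_ge_eval_add_frobenius_general {n : ℕ} (d : Fin n → ℕ)
    (f g : Fin n → MvPolynomial (Fin (n + 1)) ℝ)
    (hf : IsSystem d f) (hg : IsSystem d g)
    (hge : ∀ i, MvPolynomial.eval (fun k => if k = 0 then (1 : ℝ) else 0) (g i) = 0) :
    (∑ i, (MvPolynomial.eval (fun k => if k = 0 then (1 : ℝ) else 0) (f i)) ^ 2) +
      ∑ i, ∑ k : Fin n,
        ((MvPolynomial.eval (fun k => if k = 0 then (1 : ℝ) else 0)
            (MvPolynomial.pderiv k.succ (f i)) -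
          MvPolynomial.eval (fun k => if k = 0 then (1 : ℝ) else 0)
            (MvPolynomial.pderiv k.succ (g i))) / Real.sqrt (d i)) ^ 2
      ≤ bwNormSys (f - g) ^ 2 := by
  have he₀ : (fun k => if k = 0 then (1 : ℝ) else 0) = (Pi.single 0 1 : Fin (n + 1) → ℝ) := by
    funext k
    simp [Pi.single_apply]
  rw [he₀] at hge ⊢
  rw [bwNormSys, Real.sq_sqrt (Finset.sum_nonneg fun i _ => bwInner_self_nonneg _),
    ← Finset.sum_add_distrib]
  refine Finset.sum_le_sum fun i _ => ?_
  simpa [hge i] using ((hf i).sub (hg i)).sq_eval_add_sum_sq_pderiv_div_le_bwInner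

/-- For `e₀ = (1,0,…,0)` and `f, g ∈ H_d` with `g(e₀) = 0`,
`‖f - g‖_W² ≥ ‖f(e₀)‖₂² + ‖diag(1/√dᵢ)·Df(e₀) - diag(1/√dᵢ)·Dg(e₀)‖_F²`, where the
restricted derivatives at `e₀` are the Jacobians in the tangent directions
`e₁, …, eₙ` and `‖·‖_F` is the Frobenius norm of `n × n` matrices. -/
theorem sq_dist_ge_eval_add_frobenius {n : ℕ} (hn : 1 ≤ n) (d : Fin n → ℕ)
    (hd : ∀ i, 1 ≤ d i) (f g : Fin n → MvPolynomial (Fin (n + 1)) ℝ)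
    (hf : IsSystem d f) (hg : IsSystem d g)
    (hge : ∀ i, MvPolynomial.eval (fun k => if k = 0 then (1 : ℝ) else 0) (g i) = 0) :
    (∑ i, (MvPolynomial.eval (fun k => if k = 0 then (1 : ℝ) else 0) (f i)) ^ 2) +
      ∑ i, ∑ k : Fin n,
        ((MvPolynomial.eval (fun k => if k = 0 then (1 : ℝ) else 0)
            (MvPolynomial.pderiv k.succ (f i)) -
          MvPolynomial.eval (fun k => if k = 0 then (1 : ℝ) else 0)
            (MvPolynomial.pderiv k.succ (g i))) / Real.sqrt (d i)) ^ 2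
      ≤ bwNormSys (f - g) ^ 2 :=
  sq_dist_ge_eval_add_frobenius_general d f g hf hg hge
end
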